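/- For σ ≥ 0 and ρ ∈ (0, 1], let 𝒢(x, y, z, σ, ρ) := g(x, σ, ρ)·( f_WM(x, ρ) − f_SF(x, y, z, ρ) ). Then the partial derivative of 𝒢 with respect to y, evaluated at the profile values x = U(ρ), y = U′(ρ) − U(ρ)/ρ, z = ρ·U′(ρ), equals 2(35 − 3ρ²)(5 + 3ρ²) / ( (5 − ρ²) · (64(5 − ρ²) + σ²(5 + 3ρ²)²) ). -/

import Mathlib

open Real Set

/-- The blowup profile `U(ρ) = 2 arctan(2ρ/√(5-ρ²))`. -/
noncomputable def U (ρ : ℝ) : ℝ := 2 * Real.arctan (2 * ρ / Real.sqrt (5 - ρ ^ 2))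

/-- The strong field nonlinearity `f_SF`. -/
noncomputable def fSF (x y z r : ℝ) : ℝ :=
  -(1 / r) * Real.cot x * (z ^ 2 - y ^ 2) - (2 / r ^ 2) * (1 - x * Real.cot x) * y
    - ((3 / 2) * Real.sin (2 * x) - 2 * x - x ^ 2 * Real.cot x) / r ^ 3

/-- The wave maps nonlinearity `f_WM`. -/
noncomputable def fWM (x r : ℝ) : ℝ := (4 * x - 2 * Real.sin (2 * x)) / r ^ 3

/-- The multiplier `g(x,σ,r) = (σ² + 4sin²(x)/r²)⁻¹`. -/
noncomputable def gMult (x σ r : ℝ) : ℝ := (σ ^ 2 + 4 * Real.sin x ^ 2 / r ^ 2)⁻¹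

/-- The full nonlinearity `𝒢(x,y,z,σ,ρ)`. -/
noncomputable def Gfull (x y z σ ρ : ℝ) : ℝ := gMult x σ ρ * (fWM x ρ - fSF x y z ρ)

lemma sin_two_arctan (t : ℝ) : Real.sin (2 * Real.arctan t) = 2 * t / (1 + t ^ 2) := by
  have h1 : (0:ℝ) < 1 + t ^ 2 := by positivity
  have hpos : 0 < Real.sqrt (1 + t ^ 2) := Real.sqrt_pos.mpr h1
  rw [Real.sin_two_mul, Real.sin_arctan, Real.cos_arctan]
  field_simp
  rw [Real.sq_sqrt h1.le]

lemma cos_two_arctan (t : ℝ) : Real.cos (2 * Real.arctan t) = (1 - t ^ 2) / (1 + t ^ 2) := by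
  have h1 : (0:ℝ) < 1 + t ^ 2 := by positivity
  have hsq : Real.sqrt (1 + t ^ 2) ^ 2 = 1 + t ^ 2 := Real.sq_sqrt h1.le
  rw [Real.cos_two_mul, Real.cos_arctan, div_pow, one_pow, hsq]
  field_simp
  ring

lemma sinU (ρ : ℝ) (hρ : 0 < ρ) (hρ1 : ρ ≤ 1) :
    Real.sin (U ρ) = 4 * ρ * Real.sqrt (5 - ρ ^ 2) / (5 + 3 * ρ ^ 2) := by
  have h5 : (0:ℝ) < 5 - ρ ^ 2 := by nlinarith
  set s := Real.sqrt (5 - ρ ^ 2) with hsdef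
  have hs2 : s ^ 2 = 5 - ρ ^ 2 := Real.sq_sqrt h5.le
  have hspos : 0 < s := Real.sqrt_pos.mpr h5
  clear_value s
  rw [U, ← hsdef, sin_two_arctan]
  have hden : (0:ℝ) < 5 + 3 * ρ ^ 2 := by positivity
  have h1t : 1 + (2 * ρ / s) ^ 2 = (5 + 3 * ρ ^ 2) / s ^ 2 := by
    field_simp
    linear_combination hs2
  rw [h1t]
  field_simp
  ring

lemma cosU (ρ : ℝ) (hρ : 0 < ρ) (hρ1 : ρ ≤ 1) :
    Real.cos (U ρ) = 5 * (1 - ρ ^ 2) / (5 + 3 * ρ ^ 2) := by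
  have h5 : (0:ℝ) < 5 - ρ ^ 2 := by nlinarith
  set s := Real.sqrt (5 - ρ ^ 2) with hsdef
  have hs2 : s ^ 2 = 5 - ρ ^ 2 := Real.sq_sqrt h5.le
  have hspos : 0 < s := Real.sqrt_pos.mpr h5
  clear_value s
  rw [U, ← hsdef, cos_two_arctan]
  have hden : (0:ℝ) < 5 + 3 * ρ ^ 2 := by positivity
  have h1t : 1 + (2 * ρ / s) ^ 2 = (5 + 3 * ρ ^ 2) / s ^ 2 := by
    field_simp
    linear_combination hs2
  rw [h1t]
  field_simp
  linear_combination hs2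

lemma derivU (ρ : ℝ) (hρ : 0 < ρ) (hρ1 : ρ ≤ 1) :
    deriv U ρ = 20 / (Real.sqrt (5 - ρ ^ 2) * (5 + 3 * ρ ^ 2)) := by
  have h5 : (0:ℝ) < 5 - ρ ^ 2 := by nlinarith
  set s := Real.sqrt (5 - ρ ^ 2) with hsdef
  have hs2 : s ^ 2 = 5 - ρ ^ 2 := Real.sq_sqrt h5.le
  have hspos : 0 < s := Real.sqrt_pos.mpr h5
  have hinner : HasDerivAt (fun x : ℝ => 5 - x ^ 2) (-(2 * ρ)) ρ := by
    simpa using (HasDerivAt.const_sub 5 (hasDerivAt_pow 2 ρ))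
  have hsqrt : HasDerivAt (fun x : ℝ => Real.sqrt (5 - x ^ 2)) (1 / (2 * s) * (-(2 * ρ))) ρ :=
    (Real.hasDerivAt_sqrt h5.ne').comp ρ hinner
  have hnum : HasDerivAt (fun x : ℝ => 2 * x) 2 ρ := by
    simpa using (hasDerivAt_id ρ).const_mul 2
  have hquot : HasDerivAt (fun x : ℝ => 2 * x / Real.sqrt (5 - x ^ 2))
      ((2 * s - 2 * ρ * (1 / (2 * s) * (-(2 * ρ)))) / s ^ 2) ρ :=
    hnum.div hsqrt hspos.ne'
  have harctan : HasDerivAt (fun x : ℝ => Real.arctan (2 * x / Real.sqrt (5 - x ^ 2)))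
      (1 / (1 + (2 * ρ / s) ^ 2) * ((2 * s - 2 * ρ * (1 / (2 * s) * (-(2 * ρ)))) / s ^ 2)) ρ :=
    by have := (Real.hasDerivAt_arctan (2 * ρ / Real.sqrt (5 - ρ ^ 2))).comp ρ hquot; exact this
  have hU : HasDerivAt U
      (2 * (1 / (1 + (2 * ρ / s) ^ 2) * ((2 * s - 2 * ρ * (1 / (2 * s) * (-(2 * ρ)))) / s ^ 2))) ρ := by
    unfold U
    exact harctan.const_mul 2
  rw [hU.deriv]
  have hden : (0:ℝ) < 5 + 3 * ρ ^ 2 := by positivity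
  have h1t : 1 + (2 * ρ / s) ^ 2 = (5 + 3 * ρ ^ 2) / s ^ 2 := by
    field_simp
    linear_combination hs2
  rw [h1t]
  clear_value s
  field_simp
  linear_combination 4 * hs2

theorem first_order_coefficient_y :
    ∀ σ ρ : ℝ, 0 ≤ σ → 0 < ρ → ρ ≤ 1 →
      HasDerivAt (fun y => Gfull (U ρ) y (ρ * deriv U ρ) σ ρ)
        (2 * (35 - 3 * ρ ^ 2) * (5 + 3 * ρ ^ 2) /
          ((5 - ρ ^ 2) * (64 * (5 - ρ ^ 2) + σ ^ 2 * (5 + 3 * ρ ^ 2) ^ 2)))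
        (deriv U ρ - U ρ / ρ) := by
  intro σ ρ hσ hρ hρ1
  have h5 : (0:ℝ) < 5 - ρ ^ 2 := by nlinarith
  set s := Real.sqrt (5 - ρ ^ 2) with hsdef
  have hs2 : s ^ 2 = 5 - ρ ^ 2 := Real.sq_sqrt h5.le
  have hspos : 0 < s := Real.sqrt_pos.mpr h5
  have hden : (0:ℝ) < 5 + 3 * ρ ^ 2 := by positivity
  set x := U ρ with hx
  set z := ρ * deriv U ρ with hz
  set y₀ := deriv U ρ - U ρ / ρ with hy0
  have hy2 : HasDerivAt (fun y : ℝ => y ^ 2) (2 * y₀) y₀ := by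
    simpa using hasDerivAt_pow 2 y₀
  have hT1 : HasDerivAt (fun y : ℝ => -(1 / ρ) * Real.cot x * (z ^ 2 - y ^ 2))
      (-(1 / ρ) * Real.cot x * (-(2 * y₀))) y₀ :=
    (hy2.const_sub (z ^ 2)).const_mul _
  have hT2 : HasDerivAt (fun y : ℝ => (2 / ρ ^ 2) * (1 - x * Real.cot x) * y)
      ((2 / ρ ^ 2) * (1 - x * Real.cot x) * 1) y₀ :=
    (hasDerivAt_id y₀).const_mul _
  have hfSF : HasDerivAt (fun y : ℝ => fSF x y z ρ)
      (-(1 / ρ) * Real.cot x * (-(2 * y₀)) - (2 / ρ ^ 2) * (1 - x * Real.cot x) * 1) y₀ := by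
    unfold fSF
    exact (hT1.sub hT2).sub_const _
  have hG : HasDerivAt (fun y : ℝ => Gfull x y z σ ρ)
      (gMult x σ ρ *
        -(-(1 / ρ) * Real.cot x * (-(2 * y₀)) - (2 / ρ ^ 2) * (1 - x * Real.cot x) * 1)) y₀ := by
    unfold Gfull
    exact (hfSF.const_sub (fWM x ρ)).const_mul _
  convert hG using 1
  have hsin : Real.sin x = 4 * ρ * s / (5 + 3 * ρ ^ 2) := sinU ρ hρ hρ1
  have hcos : Real.cos x = 5 * (1 - ρ ^ 2) / (5 + 3 * ρ ^ 2) := cosU ρ hρ hρ1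
  have hU' : deriv U ρ = 20 / (s * (5 + 3 * ρ ^ 2)) := derivU ρ hρ hρ1
  have hcot : Real.cot x = 5 * (1 - ρ ^ 2) / (4 * ρ * s) := by
    rw [Real.cot_eq_cos_div_sin, hsin, hcos]
    rw [div_div_div_eq, div_eq_div_iff (by positivity) (by positivity)]
    ring
  have hbig : (0:ℝ) < 64 * (5 - ρ ^ 2) + σ ^ 2 * (5 + 3 * ρ ^ 2) ^ 2 := by positivity
  clear_value x s
  have e1 : gMult x σ ρ *
        -(-(1 / ρ) * Real.cot x * -(2 * y₀) - 2 / ρ ^ 2 * (1 - x * Real.cot x) * 1) =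
      gMult x σ ρ * (2 / ρ ^ 2 - 2 / ρ * deriv U ρ * Real.cot x) := by
    rw [hy0, ← hx]
    field_simp
    ring
  have hA : 2 / ρ * deriv U ρ * Real.cot x =
      50 * (1 - ρ ^ 2) / (ρ ^ 2 * (5 - ρ ^ 2) * (5 + 3 * ρ ^ 2)) := by
    rw [hU', hcot]
    field_simp
    linear_combination (-(200 * (1 - ρ ^ 2))) * hs2
  have hg : gMult x σ ρ =
      (5 + 3 * ρ ^ 2) ^ 2 / (σ ^ 2 * (5 + 3 * ρ ^ 2) ^ 2 + 64 * (5 - ρ ^ 2)) := by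
    rw [gMult, hsin]
    rw [div_pow, mul_pow, mul_pow]
    have hb2 : (0:ℝ) < σ ^ 2 * (5 + 3 * ρ ^ 2) ^ 2 + 64 * (5 - ρ ^ 2) := by positivity
    field_simp
    linear_combination (-64) * hs2
  rw [e1, hg, hA]
  field_simp
  ring
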